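/- arXiv:2301.05602 — 7 statements merged into one kernel-verified Lean document; each statement's English description precedes it below -/
import Mathlib

section
/- Let d be a positive integer and let α₁, α₂, ν₁, ν₂, ω₁, ω₂, ξ₁, ξ₂ be positive reals. Then the hybrid Cauchy–Matérn function φ̃_CM : [0, ∞) → ℝ defined by φ̃_CM(h) = ω₁ · (1 + h²/α₁)^{−ν₁/2} · γ(ν₁/2, (h² + α₁) ξ₁) / Γ(ν₁/2) + ω₂ ∫_{ξ₂}^∞ exp(−u h²) · (1/Γ(ν₂)) · (1/(2α₂))^{2ν₂} · u^{−ν₂−1} · exp(−1/(4 u α₂²)) du is positive definite on ℝ^d. -/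
/-!
Mathlib's `Matrix.PosSemidef` makes sense for matrices indexed by an arbitrary type (the quadratic
form is evaluated on finitely supported vectors), so a positive definite kernel `K` on `X` is
simply `(Matrix.of K).PosSemidef`. Gram kernels are positive definite, hence by the Schur product
theorem so are their entrywise powers and entrywise exponentials; writing
`exp (-u ‖x - y‖²) = exp (-u ‖x‖²) exp (-u ‖y‖²) exp (2u ⟪x, y⟫)` then shows that the Gaussian
kernel is positive definite for `u ≥ 0`. Both terms of the hybrid function are mixtures of
Gaussian kernels with nonnegative weights: the second one by definition, the first one after the
substitution `t = (h² + α₁) u`, which turns it into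
`α₁ ^ (ν₁/2) / Γ(ν₁/2) * ∫ u in (0, ξ₁], exp (-u h²) u ^ (ν₁/2 - 1) exp (-α₁ u)`.
-/

open MeasureTheory Real Set

namespace Matrix

variable {X : Type*}

theorem posSemidef_vecMulVec_self_real (g : X → ℝ) : (vecMulVec g g).PosSemidef := by
  refine ⟨?_, fun x => ?_⟩
  · ext i j; simp [vecMulVec_apply, mul_comm]
  · have : (x.sum fun i xi => x.sum fun j xj => star xi * vecMulVec g g i j * xj) =
        (x.sum fun i xi => xi * g i) ^ 2 := by
      simp only [Finsupp.sum, sq, Finset.sum_mul_sum, vecMulVec_apply, star_trivial]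
      refine Finset.sum_congr rfl fun i _ => Finset.sum_congr rfl fun j _ => by ring
    exact this ▸ sq_nonneg _

theorem posSemidef_gram_real {E : Type*} [NormedAddCommGroup E] [InnerProductSpace ℝ E]
    (v : X → E) : (gram ℝ v).PosSemidef := by
  refine ⟨?_, fun x => ?_⟩
  · ext i j; simp [gram_apply, real_inner_comm]
  · have : (x.sum fun i xi => x.sum fun j xj => star xi * gram ℝ v i j * xj) =
        inner ℝ (x.sum fun i xi => xi • v i) (x.sum fun j xj => xj • v j) := by
      simp only [Finsupp.sum, sum_inner, inner_sum, real_inner_smul_left, real_inner_smul_right,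
        gram_apply, star_trivial]
      refine Finset.sum_congr rfl fun i _ => Finset.sum_congr rfl fun j _ => ?_
      rw [real_inner_comm]; ring
    exact this ▸ real_inner_self_nonneg

theorem PosSemidef.map_pow {A : Matrix X X ℝ} (hA : A.PosSemidef) (m : ℕ) :
    (A.map (· ^ m)).PosSemidef := by
  induction m with
  | zero =>
    rw [show A.map (· ^ 0) = vecMulVec (fun _ => 1) (fun _ => 1) by ext; simp [vecMulVec_apply]]
    exact posSemidef_vecMulVec_self_real _
  | succ m ih =>
    rw [show A.map (· ^ (m + 1)) = A.map (· ^ m) ⊙ A by ext; simp [pow_succ]]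
    exact ih.hadamard hA

theorem posSemidef_tsum {ι : Type*} {A : ι → Matrix X X ℝ} (hA : ∀ m, (A m).PosSemidef)
    (hs : ∀ i j, Summable fun m => A m i j) :
    (of fun i j => ∑' m, A m i j).PosSemidef := by
  refine ⟨?_, fun x => ?_⟩
  · ext i j
    simp [fun m => ((hA m).isHermitian.apply i j).symm]
  · have : (x.sum fun i xi => x.sum fun j xj => star xi * of (fun i j => ∑' m, A m i j) i j * xj)
        = ∑' m, x.sum fun i xi => x.sum fun j xj => star xi * A m i j * xj := by
      have hsum : ∀ i j, Summable fun m => x i * A m i j * x j := fun i j =>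
        ((hs i j).mul_left _).mul_right _
      simp only [Finsupp.sum, of_apply, star_trivial, ← tsum_mul_left, ← tsum_mul_right]
      rw [Summable.tsum_finsetSum fun i _ => summable_sum fun j _ => hsum i j]
      simp_rw [Summable.tsum_finsetSum fun j _ => hsum _ j]
    exact this ▸ tsum_nonneg fun m => (hA m).2 x

theorem PosSemidef.map_exp {A : Matrix X X ℝ} (hA : A.PosSemidef) :
    (A.map Real.exp).PosSemidef := by
  have hexp := fun i j => NormedSpace.expSeries_div_hasSum_exp (A i j)
  have := posSemidef_tsum
    (fun m => (hA.map_pow m).smul (by positivity : (0 : ℝ) ≤ (m.factorial : ℝ)⁻¹))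
    (fun i j => (hexp i j).summable.congr fun m => by simp [div_eq_inv_mul])
  convert this using 1
  ext i j
  rw [map_apply, Real.exp_eq_exp_ℝ, ← (hexp i j).tsum_eq]
  simp [div_eq_inv_mul]

theorem posSemidef_integral {Ω : Type*} [MeasurableSpace Ω] {μ : Measure Ω}
    {A : Ω → Matrix X X ℝ} (hA : ∀ᵐ u ∂μ, (A u).PosSemidef)
    (hi : ∀ i j, Integrable (fun u => A u i j) μ) :
    (of fun i j => ∫ u, A u i j ∂μ).PosSemidef := by
  refine ⟨?_, fun x => ?_⟩
  · ext i j
    simp only [conjTranspose_apply, of_apply, star_trivial]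
    refine integral_congr_ae ?_
    filter_upwards [hA] with u hu using (hu.isHermitian.apply j i).symm
  · have : (x.sum fun i xi => x.sum fun j xj => star xi * of (fun i j => ∫ u, A u i j ∂μ) i j * xj)
        = ∫ u, x.sum fun i xi => x.sum fun j xj => star xi * A u i j * xj ∂μ := by
      have hint : ∀ i j, Integrable (fun u => x i * A u i j * x j) μ := fun i j =>
        ((hi i j).const_mul _).mul_const _
      simp only [Finsupp.sum, of_apply, star_trivial, ← integral_const_mul, ← integral_mul_const]
      rw [integral_finsetSum _ fun i _ => integrable_finsetSum _ fun j _ => hint i j]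
      simp_rw [integral_finsetSum _ fun j _ => hint _ j]
    exact this ▸ integral_nonneg_of_ae (by filter_upwards [hA] with u hu using hu.2 x)

theorem PosSemidef.sum_mul_nonneg {A : Matrix X X ℝ} (hA : A.PosSemidef) {ι : Type*} [Fintype ι]
    (s : ι → X) (a : ι → ℝ) : 0 ≤ ∑ i, ∑ j, a i * a j * A (s i) (s j) := by
  have := (hA.submatrix s).dotProduct_mulVec_nonneg a
  simp only [dotProduct, mulVec, submatrix_apply, star_trivial, Finset.mul_sum] at this
  exact this.trans_eq (Finset.sum_congr rfl fun i _ => Finset.sum_congr rfl fun j _ => by ring)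

end Matrix

open Matrix

variable {E : Type*} [NormedAddCommGroup E] [InnerProductSpace ℝ E]

theorem posSemidef_exp_neg_mul_norm_sub_sq {u : ℝ} (hu : 0 ≤ u) :
    (of fun x y : E => exp (-u * ‖x - y‖ ^ 2)).PosSemidef := by
  have hexp := ((posSemidef_gram_real (id : E → E)).smul (by positivity : 0 ≤ 2 * u)).map_exp
  have hG : (of fun x y : E => exp (-u * ‖x - y‖ ^ 2)) =
      vecMulVec (fun x => exp (-u * ‖x‖ ^ 2)) (fun x => exp (-u * ‖x‖ ^ 2)) ⊙
        ((2 * u) • gram ℝ (id : E → E)).map exp := by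
    ext x y
    simp only [of_apply, hadamard_apply, vecMulVec_apply, map_apply, Matrix.smul_apply, gram_apply,
      id, smul_eq_mul, ← Real.exp_add, norm_sub_sq_real]
    congr 1
    ring
  rw [hG]
  exact (posSemidef_vecMulVec_self_real _).hadamard hexp

theorem posSemidef_integral_exp_neg_mul_norm_sub_sq_mul {S : Set ℝ} (hS : MeasurableSet S)
    (hS₀ : S ⊆ Ici 0) {w : ℝ → ℝ} (hw : IntegrableOn w S) (hw₀ : ∀ u ∈ S, 0 ≤ w u) :
    (of fun x y : E => ∫ u in S, exp (-u * ‖x - y‖ ^ 2) * w u).PosSemidef := by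
  convert posSemidef_integral (μ := volume.restrict S)
    (A := fun u => w u • of fun x y : E => exp (-u * ‖x - y‖ ^ 2)) ?_ fun x y => ?_
    using 4 with x y u
  · simp [mul_comm]
  · exact ae_restrict_of_forall_mem hS fun u hu =>
      (posSemidef_exp_neg_mul_norm_sub_sq (hS₀ hu)).smul (hw₀ u hu)
  · simp only [Matrix.smul_apply, of_apply, smul_eq_mul]
    refine hw.mul_bdd (c := 1) (by fun_prop) (ae_restrict_of_forall_mem hS fun u hu => ?_)
    rw [Real.norm_of_nonneg (exp_pos _).le, exp_le_one_iff]
    exact mul_nonpos_of_nonpos_of_nonneg (neg_nonpos.mpr (hS₀ hu)) (sq_nonneg _)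

theorem rpow_neg_mul_integral_rpow_mul_exp_neg_eq {α ξ x : ℝ} (p : ℝ) (hα : 0 < α) (hξ : 0 ≤ ξ)
    (hx : 0 ≤ x) :
    (1 + x / α) ^ (-p) * ∫ t in (0 : ℝ)..(x + α) * ξ, t ^ (p - 1) * exp (-t) =
      α ^ p * ∫ u in Ioc 0 ξ, exp (-u * x) * (u ^ (p - 1) * exp (-α * u)) := by
  set c := x + α
  have hc : 0 < c := by positivity
  have hsubst : ∫ t in (0 : ℝ)..c * ξ, t ^ (p - 1) * exp (-t) =
      c * c ^ (p - 1) * ∫ u in (0 : ℝ)..ξ, exp (-u * x) * (u ^ (p - 1) * exp (-α * u)) := by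
    have h := intervalIntegral.smul_integral_comp_mul_left (a := 0) (b := ξ)
      (fun t : ℝ => t ^ (p - 1) * exp (-t)) c
    rw [mul_zero] at h
    rw [← h, smul_eq_mul, mul_assoc, ← intervalIntegral.integral_const_mul (c ^ (p - 1))]
    congr 1
    refine intervalIntegral.integral_congr fun u hu => ?_
    have hu₀ : 0 ≤ u := by simpa [hξ] using hu.1
    rw [mul_rpow hc.le hu₀, show -(c * u) = -u * x + -α * u by ring, exp_add]
    ring
  have hconst : (1 + x / α) ^ (-p) * (c * c ^ (p - 1)) = α ^ p := by
    rw [show 1 + x / α = c / α by field_simp; ring, mul_comm c, ← rpow_add_one hc.ne',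
      sub_add_cancel, rpow_neg (by positivity), div_rpow hc.le hα.le, inv_div,
      div_mul_cancel₀ _ (rpow_pos_of_pos hc p).ne']
  rw [hsubst, intervalIntegral.integral_of_le hξ, ← mul_assoc, hconst]

theorem integrableOn_rpow_sub_one_mul_exp_neg_mul_Ioc {p : ℝ} (hp : 0 < p) (α ξ : ℝ) :
    IntegrableOn (fun u => u ^ (p - 1) * exp (-α * u)) (Ioc 0 ξ) :=
  ((intervalIntegral.intervalIntegrable_rpow' (by linarith)).mul_continuousOn
    (by fun_prop)).1

theorem integrableOn_mul_rpow_neg_sub_one_mul_exp_Ioi {ν ξ : ℝ} (hν : 0 < ν) (hξ : 0 < ξ)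
    (C α : ℝ) :
    IntegrableOn (fun u => C * u ^ (-ν - 1) * exp (-1 / (4 * u * α ^ 2))) (Ioi ξ) := by
  refine ((integrableOn_Ioi_rpow_of_lt (by linarith) hξ).const_mul C).mul_bdd (c := 1)
    (by fun_prop : Measurable fun u : ℝ => exp (-1 / (4 * u * α ^ 2))).aestronglyMeasurable
    (ae_restrict_of_forall_mem measurableSet_Ioi fun u (hu : ξ < u) => ?_)
  have hu₀ : 0 < u := hξ.trans hu
  rw [norm_of_nonneg (exp_pos _).le, exp_le_one_iff]
  exact div_nonpos_of_nonpos_of_nonneg (by norm_num) (by positivity)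

theorem hybrid_cauchy_matern_posdef_general
    (d : ℕ) (α₁ α₂ ν₁ ν₂ ω₁ ω₂ ξ₁ ξ₂ : ℝ)
    (hα₁ : 0 < α₁) (hα₂ : 0 < α₂) (hν₁ : 0 < ν₁) (hν₂ : 0 < ν₂)
    (hω₁ : 0 < ω₁) (hω₂ : 0 < ω₂) (hξ₁ : 0 < ξ₁) (hξ₂ : 0 < ξ₂) :
    ∀ (n : ℕ) (s : Fin n → EuclideanSpace ℝ (Fin d)) (a : Fin n → ℝ),
      0 ≤ ∑ i : Fin n, ∑ j : Fin n, a i * a j *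
        (ω₁ * ((1 + ‖s i - s j‖ ^ 2 / α₁) ^ (-(ν₁ / 2)) *
            (∫ t in (0 : ℝ)..((‖s i - s j‖ ^ 2 + α₁) * ξ₁),
              t ^ (ν₁ / 2 - 1) * Real.exp (-t)) / Real.Gamma (ν₁ / 2)) +
         ω₂ * ∫ u in Ioi ξ₂,
            Real.exp (-u * ‖s i - s j‖ ^ 2) *
              ((1 / Real.Gamma ν₂) * (1 / (2 * α₂)) ^ (2 * ν₂) *
                u ^ (-ν₂ - 1) * Real.exp (-1 / (4 * u * α₂ ^ 2)))) := by
  intro n s a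
  have hΓ₁ : 0 < Gamma (ν₁ / 2) := Gamma_pos_of_pos (by positivity)
  have hΓ₂ : 0 < Gamma ν₂ := Gamma_pos_of_pos hν₂
  have hcauchy := (posSemidef_integral_exp_neg_mul_norm_sub_sq_mul (E := EuclideanSpace ℝ (Fin d))
    measurableSet_Ioc (Ioc_subset_Ioi_self.trans Ioi_subset_Ici_self)
    (integrableOn_rpow_sub_one_mul_exp_neg_mul_Ioc (p := ν₁ / 2) (by positivity) α₁ ξ₁)
    fun u hu => by have hu₀ : 0 < u := hu.1; positivity).smul
      (a := ω₁ * α₁ ^ (ν₁ / 2) / Gamma (ν₁ / 2)) (by positivity)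
  have hmatern := (posSemidef_integral_exp_neg_mul_norm_sub_sq_mul (E := EuclideanSpace ℝ (Fin d))
    measurableSet_Ioi (Ioi_subset_Ici hξ₂.le)
    (w := fun u => 1 / Gamma ν₂ * (1 / (2 * α₂)) ^ (2 * ν₂) * u ^ (-ν₂ - 1) *
      exp (-1 / (4 * u * α₂ ^ 2)))
    (integrableOn_mul_rpow_neg_sub_one_mul_exp_Ioi hν₂ hξ₂ _ α₂)
    fun u (hu : ξ₂ < u) => by have hu₀ : 0 < u := hξ₂.trans hu; positivity).smul hω₂.le
  refine ((hcauchy.add hmatern).sum_mul_nonneg s a).trans_eq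
    (Finset.sum_congr rfl fun i _ => Finset.sum_congr rfl fun j _ => ?_)
  simp only [Matrix.add_apply, Matrix.smul_apply, of_apply, smul_eq_mul,
    rpow_neg_mul_integral_rpow_mul_exp_neg_eq (ν₁ / 2) hα₁ hξ₁.le (sq_nonneg ‖s i - s j‖)]
  ring

/-- The hybrid Cauchy–Matérn covariance function is positive definite on
`ℝ^d` for every positive integer `d`. -/
theorem hybrid_cauchy_matern_posdef
    (d : ℕ) (hd : 0 < d) (α₁ α₂ ν₁ ν₂ ω₁ ω₂ ξ₁ ξ₂ : ℝ)
    (hα₁ : 0 < α₁) (hα₂ : 0 < α₂) (hν₁ : 0 < ν₁) (hν₂ : 0 < ν₂)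
    (hω₁ : 0 < ω₁) (hω₂ : 0 < ω₂) (hξ₁ : 0 < ξ₁) (hξ₂ : 0 < ξ₂) :
    ∀ (n : ℕ) (s : Fin n → EuclideanSpace ℝ (Fin d)) (a : Fin n → ℝ),
      0 ≤ ∑ i : Fin n, ∑ j : Fin n, a i * a j *
        (ω₁ * ((1 + ‖s i - s j‖ ^ 2 / α₁) ^ (-(ν₁ / 2)) *
            (∫ t in (0 : ℝ)..((‖s i - s j‖ ^ 2 + α₁) * ξ₁),
              t ^ (ν₁ / 2 - 1) * Real.exp (-t)) / Real.Gamma (ν₁ / 2)) +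
         ω₂ * ∫ u in Ioi ξ₂,
            Real.exp (-u * ‖s i - s j‖ ^ 2) *
              ((1 / Real.Gamma ν₂) * (1 / (2 * α₂)) ^ (2 * ν₂) *
                u ^ (-ν₂ - 1) * Real.exp (-1 / (4 * u * α₂ ^ 2)))) :=
  hybrid_cauchy_matern_posdef_general d α₁ α₂ ν₁ ν₂ ω₁ ω₂ ξ₁ ξ₂ hα₁ hα₂ hν₁ hν₂ hω₁ hω₂ hξ₁ hξ₂
end

section
/- Let α₁, ν₁, ξ₁, α₂, ν₂, ξ₂, ω₁, ω₂ be positive reals and let κ ≥ 0 be a real number. Then the quantity ω₁ ∫₀^{ξ₁} u^{κ} · (α₁^{ν₁/2}/Γ(ν₁/2)) u^{ν₁/2 − 1} exp(−α₁ u) du + ω₂ ∫_{ξ₂}^∞ u^{κ} · (1/Γ(ν₂)) (1/(2α₂))^{2ν₂} u^{−ν₂−1} exp(−1/(4 u α₂²)) du is finite if and only if κ < ν₂. -/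
open MeasureTheory Real Set

/-! Near `0` the gamma factor `exp (-α₁ u)` lies in `(0, 1]`, so the first moment is bounded by
a constant times `∫₀^{ξ₁} u ^ (κ + ν₁/2 - 1)`, which is finite since `κ + ν₁/2 > 0`. On
`(ξ₂, ∞)` the inverse-gamma factor `exp (-1 / (4 u α₂²))` lies between `exp (-1 / (4 ξ₂ α₂²))`
and `1`, so the second moment is finite exactly when `∫_{ξ₂}^∞ u ^ (κ - ν₂ - 1)` is, i.e. when
`κ < ν₂`. -/

noncomputable def gammaMixing (α ν u : ℝ) : ℝ :=
  α ^ (ν / 2) / Gamma (ν / 2) * u ^ (ν / 2 - 1) * exp (-α * u)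

noncomputable def invGammaNormConst (α ν : ℝ) : ℝ :=
  1 / Gamma ν * (1 / (2 * α)) ^ (2 * ν)

noncomputable def invGammaMixing (α ν u : ℝ) : ℝ :=
  invGammaNormConst α ν * u ^ (-ν - 1) * exp (-1 / (4 * u * α ^ 2))

section Comparison

variable {s : Set ℝ} {f g : ℝ → ℝ}

theorem setLIntegral_ofReal_lt_top_of_le (hs : MeasurableSet s) (hg : IntegrableOn g s)
    (hfg : ∀ u ∈ s, f u ≤ g u) : ∫⁻ u in s, ENNReal.ofReal (f u) < ⊤ :=
  (setLIntegral_mono' hs fun u hu => ENNReal.ofReal_le_ofReal (hfg u hu)).trans_lt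
    hg.setLIntegral_lt_top

theorem integrableOn_of_const_mul_le_of_setLIntegral_lt_top {c : ℝ} (hc : 0 < c)
    (hs : MeasurableSet s) (hg : Measurable g) (hg₀ : ∀ u ∈ s, 0 ≤ g u)
    (hgf : ∀ u ∈ s, c * g u ≤ f u) (hf : ∫⁻ u in s, ENNReal.ofReal (f u) < ⊤) :
    IntegrableOn g s := by
  have hcg : ENNReal.ofReal c * ∫⁻ u in s, ENNReal.ofReal (g u) < ⊤ := calc
    _ ≤ ∫⁻ u in s, ENNReal.ofReal (c * g u) := by
      simp only [ENNReal.ofReal_mul hc.le]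
      exact lintegral_const_mul_le _ _
    _ ≤ ∫⁻ u in s, ENNReal.ofReal (f u) :=
      setLIntegral_mono' hs fun u hu => ENNReal.ofReal_le_ofReal (hgf u hu)
    _ < ⊤ := hf
  refine ⟨hg.aestronglyMeasurable, (hasFiniteIntegral_iff_ofReal ?_).2 ?_⟩
  · exact (ae_restrict_iff' hs).2 (ae_of_all _ hg₀)
  · exact ENNReal.lt_top_of_mul_ne_top_right hcg.ne (ENNReal.ofReal_pos.2 hc).ne'

end Comparison

section Mixing

variable {α ν κ u : ℝ}

theorem rpow_mul_gammaMixing_le (hα : 0 ≤ α) (hν : 0 < ν) (hu : 0 < u) :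
    u ^ κ * gammaMixing α ν u ≤ α ^ (ν / 2) / Gamma (ν / 2) * u ^ (κ + ν / 2 - 1) := by
  have hC : 0 ≤ α ^ (ν / 2) / Gamma (ν / 2) :=
    div_nonneg (rpow_nonneg hα _) (Gamma_pos_of_pos (by linarith)).le
  have hexp : exp (-α * u) ≤ 1 := exp_le_one_iff.2 (by nlinarith)
  calc u ^ κ * gammaMixing α ν u
      ≤ u ^ κ * (α ^ (ν / 2) / Gamma (ν / 2) * u ^ (ν / 2 - 1)) := by
        unfold gammaMixing
        exact mul_le_mul_of_nonneg_left (mul_le_of_le_one_right (by positivity) hexp)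
          (by positivity)
    _ = _ := by rw [add_sub_assoc, rpow_add hu]; ring

theorem setLIntegral_Ioo_rpow_mul_gammaMixing_lt_top (hα : 0 ≤ α) (hν : 0 < ν)
    (hκ : -(ν / 2) < κ) (ξ : ℝ) :
    ∫⁻ u in Ioo 0 ξ, ENNReal.ofReal (u ^ κ * gammaMixing α ν u) < ⊤ := by
  have hint : IntegrableOn (fun u : ℝ => u ^ (κ + ν / 2 - 1)) (Ioo 0 ξ) :=
    (intervalIntegral.intervalIntegrable_rpow' (by linarith)).1.mono_set Ioo_subset_Ioc_self
  exact setLIntegral_ofReal_lt_top_of_le measurableSet_Ioo (hint.const_mul _)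
    fun u hu => rpow_mul_gammaMixing_le hα hν hu.1

theorem invGammaNormConst_pos (hα : 0 < α) (hν : 0 < ν) : 0 < invGammaNormConst α ν := by
  have := Gamma_pos_of_pos hν
  unfold invGammaNormConst
  positivity

theorem rpow_mul_invGammaMixing_eq (hu : 0 < u) :
    u ^ κ * invGammaMixing α ν u =
      invGammaNormConst α ν * exp (-1 / (4 * u * α ^ 2)) * u ^ (κ - ν - 1) := by
  rw [sub_sub, sub_eq_add_neg, neg_add', rpow_add hu, invGammaMixing]
  ring

theorem rpow_mul_invGammaMixing_le (hα : 0 < α) (hν : 0 < ν) (hu : 0 < u) :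
    u ^ κ * invGammaMixing α ν u ≤ invGammaNormConst α ν * u ^ (κ - ν - 1) := by
  have hexp : exp (-1 / (4 * u * α ^ 2)) ≤ 1 :=
    exp_le_one_iff.2 (div_nonpos_of_nonpos_of_nonneg (by norm_num) (by positivity))
  rw [rpow_mul_invGammaMixing_eq hu]
  gcongr
  exact mul_le_of_le_one_right (invGammaNormConst_pos hα hν).le hexp

theorem le_rpow_mul_invGammaMixing (hα : 0 < α) (hν : 0 < ν) {ξ : ℝ} (hξ : 0 < ξ)
    (hξu : ξ ≤ u) :
    invGammaNormConst α ν * exp (-1 / (4 * ξ * α ^ 2)) * u ^ (κ - ν - 1) ≤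
      u ^ κ * invGammaMixing α ν u := by
  have hexp : exp (-1 / (4 * ξ * α ^ 2)) ≤ exp (-1 / (4 * u * α ^ 2)) := by
    simp only [neg_div, exp_le_exp, neg_le_neg_iff]
    exact one_div_le_one_div_of_le (by positivity) (by gcongr)
  have hu : 0 < u := hξ.trans_le hξu
  rw [rpow_mul_invGammaMixing_eq hu]
  have := invGammaNormConst_pos hα hν
  gcongr

theorem setLIntegral_Ioi_rpow_mul_invGammaMixing_lt_top_iff (hα : 0 < α) (hν : 0 < ν)
    {ξ : ℝ} (hξ : 0 < ξ) :
    ∫⁻ u in Ioi ξ, ENNReal.ofReal (u ^ κ * invGammaMixing α ν u) < ⊤ ↔ κ < ν := by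
  have hint : IntegrableOn (fun u : ℝ => u ^ (κ - ν - 1)) (Ioi ξ) ↔ κ < ν := by
    rw [integrableOn_Ioi_rpow_iff hξ]
    constructor <;> intro <;> linarith
  rw [← hint]
  constructor
  · exact integrableOn_of_const_mul_le_of_setLIntegral_lt_top
      (mul_pos (invGammaNormConst_pos hα hν) (exp_pos _)) measurableSet_Ioi (by fun_prop)
      (fun u hu => rpow_nonneg (hξ.trans hu).le _)
      fun u hu => le_rpow_mul_invGammaMixing hα hν hξ hu.le
  · exact fun h => setLIntegral_ofReal_lt_top_of_le measurableSet_Ioi (h.const_mul _)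
      fun u hu => rpow_mul_invGammaMixing_le hα hν (hξ.trans hu)

end Mixing

theorem hybrid_cauchy_matern_moment_finite_iff_general
    (α₁ ν₁ ξ₁ α₂ ν₂ ξ₂ ω₁ ω₂ κ : ℝ)
    (hα₁ : 0 < α₁) (hν₁ : 0 < ν₁)
    (hα₂ : 0 < α₂) (hν₂ : 0 < ν₂) (hξ₂ : 0 < ξ₂)
    (hω₂ : 0 < ω₂) (hκ : 0 ≤ κ) :
    (ENNReal.ofReal ω₁ *
        (∫⁻ u in Ioo (0 : ℝ) ξ₁,
          ENNReal.ofReal (u ^ κ * ((α₁ ^ (ν₁ / 2) / Real.Gamma (ν₁ / 2)) *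
            u ^ (ν₁ / 2 - 1) * Real.exp (-α₁ * u)))) +
      ENNReal.ofReal ω₂ *
        (∫⁻ u in Ioi ξ₂,
          ENNReal.ofReal (u ^ κ * ((1 / Real.Gamma ν₂) * (1 / (2 * α₂)) ^ (2 * ν₂) *
            u ^ (-ν₂ - 1) * Real.exp (-1 / (4 * u * α₂ ^ 2))))) < ⊤)
      ↔ κ < ν₂ := by
  have hcauchy := setLIntegral_Ioo_rpow_mul_gammaMixing_lt_top (κ := κ) hα₁.le hν₁
    (by linarith) ξ₁
  have hmatern := setLIntegral_Ioi_rpow_mul_invGammaMixing_lt_top_iff (κ := κ) hα₂ hν₂ hξ₂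
  have hω₂ : ENNReal.ofReal ω₂ ≠ 0 := (ENNReal.ofReal_pos.2 hω₂).ne'
  rw [ENNReal.add_lt_top, ← hmatern]
  exact ⟨fun h => ENNReal.lt_top_of_mul_ne_top_right h.2.ne hω₂,
    fun h => ⟨ENNReal.mul_lt_top ENNReal.ofReal_lt_top hcauchy,
      ENNReal.mul_lt_top ENNReal.ofReal_lt_top h⟩⟩

/-- The κ-th moment of the piecewise mixing function of the hybrid
Cauchy–Matérn model is finite if and only if `κ < ν₂`. -/
theorem hybrid_cauchy_matern_moment_finite_iff
    (α₁ ν₁ ξ₁ α₂ ν₂ ξ₂ ω₁ ω₂ κ : ℝ)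
    (hα₁ : 0 < α₁) (hν₁ : 0 < ν₁) (hξ₁ : 0 < ξ₁)
    (hα₂ : 0 < α₂) (hν₂ : 0 < ν₂) (hξ₂ : 0 < ξ₂)
    (hω₁ : 0 < ω₁) (hω₂ : 0 < ω₂) (hκ : 0 ≤ κ) :
    (ENNReal.ofReal ω₁ *
        (∫⁻ u in Ioo (0 : ℝ) ξ₁,
          ENNReal.ofReal (u ^ κ * ((α₁ ^ (ν₁ / 2) / Real.Gamma (ν₁ / 2)) *
            u ^ (ν₁ / 2 - 1) * Real.exp (-α₁ * u)))) +
      ENNReal.ofReal ω₂ *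
        (∫⁻ u in Ioi ξ₂,
          ENNReal.ofReal (u ^ κ * ((1 / Real.Gamma ν₂) * (1 / (2 * α₂)) ^ (2 * ν₂) *
            u ^ (-ν₂ - 1) * Real.exp (-1 / (4 * u * α₂ ^ 2))))) < ⊤)
      ↔ κ < ν₂ :=
  hybrid_cauchy_matern_moment_finite_iff_general α₁ ν₁ ξ₁ α₂ ν₂ ξ₂ ω₁ ω₂ κ hα₁ hν₁ hα₂ hν₂ hξ₂ hω₂
    hκ
end

section
/- Let κ be a natural number and let g : (0, ∞) → [0, ∞) be measurable with ∫₀^∞ g(u) du < ∞ and ∫₀^∞ u^{κ} g(u) du < ∞. Then the function φ : ℝ → ℝ defined by φ(h) = ∫₀^∞ exp(−u h²) g(u) du is 2κ-times continuously differentiable on ℝ. -/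
/-!
Differentiating under the integral sign, the derivatives of `φ` are linear combinations of the
functions `x ↦ ∫ u^m x^n e^{-u x²} g(u) du`, and `d/dx` sends the index `(m, n)` to `(m, n - 1)`
and `(m + 1, n + 1)`, raising `2m - n` by one. Since `u^m |x|^n e^{-u x²} ≤ C(x) (1 + u^κ)`,
locally uniformly in `x`, whenever `2m ≤ n + 2κ`, dominated convergence justifies each step as
long as `2m - n ≤ 2κ`, which leaves room for `2κ` derivatives starting from `(m, n) = (0, 0)`.
-/

open MeasureTheory Real Set

open Filter
open scoped Nat

lemma pow_mul_exp_neg_le_factorial {t : ℝ} (ht : 0 ≤ t) (k : ℕ) : t ^ k * exp (-t) ≤ k ! := by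
  have h := pow_div_factorial_le_exp t ht k
  rw [div_le_iff₀ (by positivity)] at h
  rw [exp_neg, ← div_eq_mul_inv, div_le_iff₀ (exp_pos t)]
  linarith

lemma pow_le_one_add_pow {u : ℝ} (hu : 0 ≤ u) {j k : ℕ} (hjk : j ≤ k) : u ^ j ≤ 1 + u ^ k := by
  rcases le_total u 1 with h | h
  · linarith [pow_le_one₀ (n := j) hu h, pow_nonneg hu k]
  · linarith [pow_le_pow_right₀ h hjk]

/-- With `k = min m ⌊n/2⌋`, split `u^m x^n = u^(m-k) (u x²)^k x^(n-2k)`: the middle factor is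
absorbed by `e^{-u x²}`, and `m - k ≤ κ` exactly when `2m ≤ n + 2κ`. -/
lemma abs_pow_mul_pow_mul_exp_le {κ m n : ℕ} (hmn : 2 * m ≤ n + 2 * κ) {u : ℝ} (hu : 0 ≤ u)
    (x : ℝ) : |u ^ m * x ^ n * exp (-u * x ^ 2)| ≤ n ! * (1 + |x|) ^ n * (1 + u ^ κ) := by
  set k := min m (n / 2)
  have hsplit : |u ^ m * x ^ n * exp (-u * x ^ 2)|
      = u ^ (m - k) * ((u * x ^ 2) ^ k * exp (-(u * x ^ 2))) * |x| ^ (n - 2 * k) := by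
    have hm : m = m - k + k := by omega
    have hn : n = 2 * k + (n - 2 * k) := by omega
    rw [abs_mul, abs_mul, abs_pow, abs_pow, abs_of_nonneg hu, abs_of_pos (exp_pos _)]
    conv_lhs => rw [hm, hn]
    rw [pow_add, pow_add, pow_mul, sq_abs, mul_pow, neg_mul]
    ring
  have hu_pow : u ^ (m - k) ≤ 1 + u ^ κ := pow_le_one_add_pow hu (by omega)
  have hexp : (u * x ^ 2) ^ k * exp (-(u * x ^ 2)) ≤ n ! := by
    calc _ ≤ (k ! : ℝ) := pow_mul_exp_neg_le_factorial (by positivity) k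
      _ ≤ n ! := by exact_mod_cast Nat.factorial_le (by omega)
  have hx_pow : |x| ^ (n - 2 * k) ≤ (1 + |x|) ^ n :=
    calc _ ≤ (1 + |x|) ^ (n - 2 * k) := by gcongr; linarith
      _ ≤ (1 + |x|) ^ n := pow_le_pow_right₀ (by linarith [abs_nonneg x]) (by omega)
  rw [hsplit]
  calc _ ≤ (1 + u ^ κ) * (n ! : ℝ) * (1 + |x|) ^ n := by gcongr
    _ = _ := by ring

noncomputable def gaussianMonomial (m n : ℕ) (x u : ℝ) : ℝ := u ^ m * x ^ n * exp (-u * x ^ 2)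

lemma continuous_gaussianMonomial (m n : ℕ) :
    Continuous fun p : ℝ × ℝ => gaussianMonomial m n p.1 p.2 := by
  unfold gaussianMonomial
  fun_prop

lemma hasDerivAt_gaussianMonomial (m n : ℕ) (x u : ℝ) :
    HasDerivAt (gaussianMonomial m n · u)
      (n * gaussianMonomial m (n - 1) x u - 2 * gaussianMonomial (m + 1) (n + 1) x u) x := by
  have h := ((hasDerivAt_pow n x).fun_mul ((hasDerivAt_pow 2 x).const_mul (-u)).exp).const_mul
    (u ^ m)
  rw [show (gaussianMonomial m n · u) = fun y => u ^ m * (y ^ n * exp (-u * y ^ 2)) from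
    funext fun y => mul_assoc _ _ _]
  refine h.congr_deriv ?_
  simp only [gaussianMonomial]
  push_cast
  ring

noncomputable def gaussianMixtureMonomial (g : ℝ → ℝ) (m n : ℕ) (x : ℝ) : ℝ :=
  ∫ u in Ioi 0, gaussianMonomial m n x u * g u

section Mixture

variable {κ : ℕ} {g : ℝ → ℝ}

lemma norm_gaussianMonomial_mul_le {m n : ℕ} (hmn : 2 * m ≤ n + 2 * κ) {x u R : ℝ}
    (hu : 0 < u) (hxR : |x| ≤ R) :
    ‖gaussianMonomial m n x u * g u‖ ≤ n ! * (1 + R) ^ n * (‖g u‖ + ‖u ^ κ * g u‖) := by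
  rw [norm_mul, norm_mul, norm_pow, Real.norm_of_nonneg hu.le, Real.norm_eq_abs]
  calc _ ≤ n ! * (1 + |x|) ^ n * (1 + u ^ κ) * ‖g u‖ := by
        gcongr; exact abs_pow_mul_pow_mul_exp_le hmn hu.le x
    _ ≤ n ! * (1 + R) ^ n * (1 + u ^ κ) * ‖g u‖ := by gcongr
    _ = _ := by ring

lemma aestronglyMeasurable_gaussianMonomial_mul (hgi : IntegrableOn g (Ioi 0)) (m n : ℕ)
    (x : ℝ) :
    AEStronglyMeasurable (fun u => gaussianMonomial m n x u * g u) (volume.restrict (Ioi 0)) :=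
  ((continuous_gaussianMonomial m n).comp (Continuous.prodMk_right x)).aestronglyMeasurable.mul
    hgi.aestronglyMeasurable

lemma integrableOn_majorant (hgi : IntegrableOn g (Ioi 0))
    (hgκ : IntegrableOn (fun u => u ^ κ * g u) (Ioi 0)) (C : ℝ) :
    IntegrableOn (fun u => C * (‖g u‖ + ‖u ^ κ * g u‖)) (Ioi 0) :=
  (hgi.norm.add hgκ.norm).const_mul C

lemma abs_le_abs_add_one_of_mem_ball {x x₀ : ℝ} (hx : x ∈ Metric.ball x₀ 1) : |x| ≤ |x₀| + 1 :=
  (norm_lt_of_mem_ball hx).le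

lemma integrableOn_gaussianMonomial_mul (hgi : IntegrableOn g (Ioi 0))
    (hgκ : IntegrableOn (fun u => u ^ κ * g u) (Ioi 0)) {m n : ℕ} (hmn : 2 * m ≤ n + 2 * κ)
    (x : ℝ) : IntegrableOn (fun u => gaussianMonomial m n x u * g u) (Ioi 0) :=
  (integrableOn_majorant hgi hgκ _).mono' (aestronglyMeasurable_gaussianMonomial_mul hgi m n x)
    (ae_restrict_of_forall_mem measurableSet_Ioi fun _ hu =>
      norm_gaussianMonomial_mul_le hmn hu le_rfl)

lemma continuous_gaussianMixtureMonomial (hgi : IntegrableOn g (Ioi 0))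
    (hgκ : IntegrableOn (fun u => u ^ κ * g u) (Ioi 0)) {m n : ℕ} (hmn : 2 * m ≤ n + 2 * κ) :
    Continuous (gaussianMixtureMonomial g m n) := by
  refine continuous_iff_continuousAt.2 fun x₀ => continuousAt_of_dominated
    (Eventually.of_forall (aestronglyMeasurable_gaussianMonomial_mul hgi m n))
    ?_ (integrableOn_majorant hgi hgκ (n ! * (1 + (|x₀| + 1)) ^ n))
    (ae_of_all _ fun u => ?_)
  · filter_upwards [Metric.ball_mem_nhds x₀ one_pos] with x hx
    exact ae_restrict_of_forall_mem measurableSet_Ioi fun _ hu =>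
      norm_gaussianMonomial_mul_le hmn hu (abs_le_abs_add_one_of_mem_ball hx)
  · exact (((continuous_gaussianMonomial m n).comp (Continuous.prodMk_left u)).mul
      continuous_const).continuousAt

lemma hasDerivAt_gaussianMixtureMonomial (hgi : IntegrableOn g (Ioi 0))
    (hgκ : IntegrableOn (fun u => u ^ κ * g u) (Ioi 0)) {m n : ℕ} (hmn : 2 * m + 1 ≤ n + 2 * κ)
    (x₀ : ℝ) :
    HasDerivAt (gaussianMixtureMonomial g m n)
      (n * gaussianMixtureMonomial g m (n - 1) x₀
        - 2 * gaussianMixtureMonomial g (m + 1) (n + 1) x₀) x₀ := by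
  have hlow := integrableOn_gaussianMonomial_mul hgi hgκ (m := m) (n := n - 1) (by omega)
  have hhigh := integrableOn_gaussianMonomial_mul hgi hgκ (m := m + 1) (n := n + 1) (by omega)
  have h := hasDerivAt_integral_of_dominated_loc_of_deriv_le (μ := volume.restrict (Ioi 0))
    (F' := fun x u => n * (gaussianMonomial m (n - 1) x u * g u)
      - 2 * (gaussianMonomial (m + 1) (n + 1) x u * g u))
    (Metric.ball_mem_nhds x₀ one_pos)
    (Eventually.of_forall (aestronglyMeasurable_gaussianMonomial_mul hgi m n))
    (integrableOn_gaussianMonomial_mul hgi hgκ (by omega) x₀)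
    (((hlow x₀).const_mul _).sub ((hhigh x₀).const_mul _)).aestronglyMeasurable
    (ae_restrict_of_forall_mem measurableSet_Ioi fun u hu x hx => ?_)
    (integrableOn_majorant hgi hgκ (n * ((n - 1) ! * (1 + (|x₀| + 1)) ^ (n - 1))
      + 2 * ((n + 1) ! * (1 + (|x₀| + 1)) ^ (n + 1))))
    (ae_of_all _ fun u x _ => ?_)
  · rw [integral_sub ((hlow x₀).const_mul _) ((hhigh x₀).const_mul _), integral_const_mul,
      integral_const_mul] at h
    exact h.2
  · have hxR := abs_le_abs_add_one_of_mem_ball hx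
    have hlow_le := norm_gaussianMonomial_mul_le (κ := κ) (g := g) (m := m) (n := n - 1)
      (by omega) hu hxR
    have hhigh_le := norm_gaussianMonomial_mul_le (κ := κ) (g := g) (m := m + 1) (n := n + 1)
      (by omega) hu hxR
    refine (norm_sub_le _ _).trans ?_
    rw [norm_mul (n : ℝ), norm_mul (2 : ℝ), Real.norm_natCast, Real.norm_two]
    calc _ ≤ n * ((n - 1) ! * (1 + (|x₀| + 1)) ^ (n - 1) * (‖g u‖ + ‖u ^ κ * g u‖))
          + 2 * ((n + 1) ! * (1 + (|x₀| + 1)) ^ (n + 1) * (‖g u‖ + ‖u ^ κ * g u‖)) := by gcongr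
      _ = _ := by ring
  · exact ((hasDerivAt_gaussianMonomial m n x u).mul_const (g u)).congr_deriv (by ring)

lemma contDiff_gaussianMixtureMonomial (hgi : IntegrableOn g (Ioi 0))
    (hgκ : IntegrableOn (fun u => u ^ κ * g u) (Ioi 0)) :
    ∀ b m n : ℕ, 2 * m + b ≤ n + 2 * κ → ContDiff ℝ b (gaussianMixtureMonomial g m n)
  | 0, _, _, hmn => contDiff_zero.2 (continuous_gaussianMixtureMonomial hgi hgκ (by omega))
  | b + 1, m, n, hmn => by
    have hderiv := hasDerivAt_gaussianMixtureMonomial hgi hgκ (m := m) (n := n) (by omega)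
    rw [Nat.cast_succ, contDiff_succ_iff_deriv, funext fun x => (hderiv x).deriv]
    refine ⟨fun x => (hderiv x).differentiableAt, by simp, ?_⟩
    exact
      (contDiff_const.mul (contDiff_gaussianMixtureMonomial hgi hgκ b m (n - 1) (by omega))).sub
        (contDiff_const.mul (contDiff_gaussianMixtureMonomial hgi hgκ b (m + 1) (n + 1) (by omega)))

end Mixture

theorem gaussian_scale_mixture_contDiff_general
    (κ : ℕ) (g : ℝ → ℝ)
    (hgi : IntegrableOn g (Ioi 0))
    (hgκ : IntegrableOn (fun u => u ^ κ * g u) (Ioi 0)) :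
    ContDiff ℝ ((2 * κ : ℕ) : ℕ∞)
      (fun h : ℝ => ∫ u in Ioi (0 : ℝ), Real.exp (-u * h ^ 2) * g u) := by
  have h := contDiff_gaussianMixtureMonomial hgi hgκ (2 * κ) 0 0 (by omega)
  unfold gaussianMixtureMonomial gaussianMonomial at h
  simpa using h

/-- If the mixing function has a finite κ-th moment, the Gaussian scale
mixture is 2κ-times continuously differentiable. -/
theorem gaussian_scale_mixture_contDiff
    (κ : ℕ) (g : ℝ → ℝ) (hgm : Measurable g)
    (hg0 : ∀ u ∈ Ioi (0 : ℝ), 0 ≤ g u)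
    (hgi : IntegrableOn g (Ioi 0))
    (hgκ : IntegrableOn (fun u => u ^ κ * g u) (Ioi 0)) :
    ContDiff ℝ ((2 * κ : ℕ) : ℕ∞)
      (fun h : ℝ => ∫ u in Ioi (0 : ℝ), Real.exp (-u * h ^ 2) * g u) :=
  gaussian_scale_mixture_contDiff_general κ g hgi hgκ
end

section
/- Let α₁, ν₁, ξ₁, α₂, ν₂, ξ₂, ω₁, ω₂ be positive reals, and define φ̃_CM(h) = ω₁ ∫₀^{ξ₁} exp(−u h²) (α₁^{ν₁/2}/Γ(ν₁/2)) u^{ν₁/2 − 1} exp(−α₁ u) du + ω₂ ∫_{ξ₂}^∞ exp(−u h²) (1/Γ(ν₂)) (1/(2α₂))^{2ν₂} u^{−ν₂−1} exp(−1/(4 u α₂²)) du for h ≥ 0. Then lim_{h → ∞} h^{ν₁} φ̃_CM(h) = ω₁ α₁^{ν₁/2}. In particular φ̃_CM(h) has polynomial decay of order h^{−ν₁} at infinity, governed solely by ν₁. -/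
/-!
Integrating the Gaussian `exp (-u h²)` against the gamma density over all of `(0, ∞)` gives exactly
`(α₁ / (h² + α₁)) ^ (ν₁ / 2)`, which is `α₁ ^ (ν₁ / 2) h ^ (-ν₁)` to leading order. Every remaining
piece — the gamma integral over `(ξ₁, ∞)` and the whole Matérn part — integrates `exp (-u h²)` against
an integrable function on `(ξ, ∞)` with `ξ > 0`, so it is `O(exp (-ξ h²))` and invisible after
multiplication by `h ^ ν₁`.
-/

open MeasureTheory Real Set Filter

noncomputable section

/-- The gamma mixing function `g_C(u; α, ν)`. -/
def cauchyMixing (α ν u : ℝ) : ℝ :=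
  α ^ (ν / 2) / Gamma (ν / 2) * u ^ (ν / 2 - 1) * exp (-α * u)

/-- The inverse-gamma mixing function `g_M(u; α, ν)`. -/
def maternMixing (α ν u : ℝ) : ℝ :=
  1 / Gamma ν * (1 / (2 * α)) ^ (2 * ν) * u ^ (-ν - 1) * exp (-1 / (4 * u * α ^ 2))

end

lemma exp_neg_mul_mul_cauchyMixing (α ν t u : ℝ) :
    exp (-u * t) * cauchyMixing α ν u =
      α ^ (ν / 2) / Gamma (ν / 2) * (u ^ (ν / 2 - 1) * exp (-((t + α) * u))) := by
  rw [cauchyMixing, show -((t + α) * u) = -u * t + -α * u by ring, exp_add]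
  ring

lemma integrableOn_exp_neg_mul_mul_cauchyMixing {α ν t : ℝ} (hν : 0 < ν) (ht : 0 < t + α) :
    IntegrableOn (fun u => exp (-u * t) * cauchyMixing α ν u) (Ioi 0) := by
  simp_rw [exp_neg_mul_mul_cauchyMixing]
  refine Integrable.const_mul ?_ _
  exact (integrableOn_rpow_mul_exp_neg_mul_rpow (s := ν / 2 - 1) (p := 1) (by linarith) one_pos
    ht).congr_fun (fun u _ => by simp only [rpow_one, neg_mul]) measurableSet_Ioi

lemma integral_exp_neg_mul_mul_cauchyMixing_Ioi {α ν t : ℝ} (hα : 0 < α) (hν : 0 < ν)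
    (ht : 0 < t + α) :
    ∫ u in Ioi 0, exp (-u * t) * cauchyMixing α ν u = (α / (t + α)) ^ (ν / 2) := by
  simp_rw [exp_neg_mul_mul_cauchyMixing]
  rw [integral_const_mul, integral_rpow_mul_exp_neg_mul_Ioi (half_pos hν) ht,
    div_eq_mul_one_div α, mul_rpow hα.le (by positivity)]
  field_simp [(Gamma_pos_of_pos (half_pos hν)).ne']

lemma integrableOn_maternMixing_Ioi {α ν ξ : ℝ} (hν : 0 < ν) (hξ : 0 < ξ) :
    IntegrableOn (maternMixing α ν) (Ioi ξ) := by
  refine ((integrableOn_Ioi_rpow_of_lt (a := -ν - 1) (by linarith) hξ).const_mul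
    |1 / Gamma ν * (1 / (2 * α)) ^ (2 * ν)|).mono' ?_ ?_
  · exact (by unfold maternMixing; fun_prop : Measurable (maternMixing α ν)).aestronglyMeasurable
  · refine (ae_restrict_iff' measurableSet_Ioi).2 (ae_of_all _ fun u hu => ?_)
    have hu : 0 < u := hξ.trans hu
    have hexp : exp (-1 / (4 * u * α ^ 2)) ≤ 1 :=
      exp_le_one_iff.2 (div_nonpos_of_nonpos_of_nonneg (by norm_num) (by positivity))
    rw [maternMixing, norm_mul, norm_mul, norm_of_nonneg (rpow_pos_of_pos hu _).le,
      norm_of_nonneg (exp_pos _).le, norm_eq_abs]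
    exact mul_le_of_le_one_right (by positivity) hexp

lemma tendsto_rpow_mul_exp_neg_mul_sq (ν : ℝ) {c : ℝ} (hc : 0 < c) :
    Tendsto (fun h : ℝ => h ^ ν * exp (-c * h ^ 2)) atTop (nhds 0) := by
  refine ((tendsto_rpow_mul_exp_neg_mul_atTop_nhds_zero (ν / 2) c hc).comp
    (tendsto_pow_atTop two_ne_zero)).congr' ?_
  filter_upwards [eventually_ge_atTop 0] with h hh
  simp only [Function.comp_apply, rpow_div_two_eq_sqrt _ (sq_nonneg h), sqrt_sq hh]

lemma tendsto_rpow_mul_integral_exp_neg_mul_sq_Ioi (ν : ℝ) {ξ : ℝ} (hξ : 0 < ξ) {f : ℝ → ℝ}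
    (hf : IntegrableOn f (Ioi ξ)) :
    Tendsto (fun h : ℝ => h ^ ν * ∫ u in Ioi ξ, exp (-u * h ^ 2) * f u) atTop (nhds 0) := by
  have hdecay := (tendsto_rpow_mul_exp_neg_mul_sq ν hξ).mul_const (∫ u in Ioi ξ, ‖f u‖)
  rw [zero_mul] at hdecay
  refine squeeze_zero_norm' ?_ hdecay
  filter_upwards [eventually_ge_atTop 0] with h hh
  have hbound : ∀ᵐ u ∂volume.restrict (Ioi ξ),
      ‖exp (-u * h ^ 2) * f u‖ ≤ exp (-ξ * h ^ 2) * ‖f u‖ := by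
    refine (ae_restrict_iff' measurableSet_Ioi).2 (ae_of_all _ fun u hu => ?_)
    rw [norm_mul, norm_of_nonneg (exp_pos _).le]
    gcongr
    exact hu.le
  calc ‖h ^ ν * ∫ u in Ioi ξ, exp (-u * h ^ 2) * f u‖
      ≤ h ^ ν * ∫ u in Ioi ξ, exp (-ξ * h ^ 2) * ‖f u‖ := by
        rw [norm_mul, norm_of_nonneg (rpow_nonneg hh _)]
        gcongr
        exact norm_integral_le_of_norm_le (hf.norm.const_mul _) hbound
    _ = h ^ ν * exp (-ξ * h ^ 2) * ∫ u in Ioi ξ, ‖f u‖ := by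
        rw [integral_const_mul, mul_assoc]

lemma tendsto_rpow_mul_div_sq_add_rpow {α : ℝ} (hα : 0 < α) (ν : ℝ) :
    Tendsto (fun h : ℝ => h ^ ν * (α / (h ^ 2 + α)) ^ (ν / 2)) atTop (nhds (α ^ (ν / 2))) := by
  have hsq : Tendsto (fun h : ℝ => h ^ 2 + α) atTop atTop :=
    tendsto_atTop_add_const_right _ _ (tendsto_pow_atTop two_ne_zero)
  have hbase : Tendsto (fun h : ℝ => α - α ^ 2 / (h ^ 2 + α)) atTop (nhds α) := by
    simpa using tendsto_const_nhds.sub (tendsto_const_nhds.div_atTop hsq)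
  refine (hbase.rpow_const (Or.inl hα.ne')).congr' ?_
  filter_upwards [eventually_ge_atTop 0] with h hh
  have hpos : 0 < h ^ 2 + α := by positivity
  rw [show α - α ^ 2 / (h ^ 2 + α) = h ^ 2 * (α / (h ^ 2 + α)) by field_simp; ring,
    mul_rpow (sq_nonneg h) (by positivity), rpow_div_two_eq_sqrt _ (sq_nonneg h), sqrt_sq hh]

lemma tendsto_rpow_mul_intervalIntegral_exp_neg_mul_sq_mul_cauchyMixing {α ν ξ : ℝ}
    (hα : 0 < α) (hν : 0 < ν) (hξ : 0 < ξ) :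
    Tendsto (fun h : ℝ => h ^ ν * ∫ u in (0 : ℝ)..ξ, exp (-u * h ^ 2) * cauchyMixing α ν u)
      atTop (nhds (α ^ (ν / 2))) := by
  have hsplit (h : ℝ) : ∫ u in (0 : ℝ)..ξ, exp (-u * h ^ 2) * cauchyMixing α ν u =
      (α / (h ^ 2 + α)) ^ (ν / 2) - ∫ u in Ioi ξ, exp (-u * h ^ 2) * cauchyMixing α ν u := by
    rw [← intervalIntegral.integral_Ioi_sub_Ioi
        (integrableOn_exp_neg_mul_mul_cauchyMixing hν (by positivity)) hξ.le,
      integral_exp_neg_mul_mul_cauchyMixing_Ioi hα hν (by positivity)]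
  have hker : IntegrableOn (cauchyMixing α ν) (Ioi 0) := by
    simpa using integrableOn_exp_neg_mul_mul_cauchyMixing (t := 0) hν (by simpa using hα)
  have htail := tendsto_rpow_mul_integral_exp_neg_mul_sq_Ioi ν hξ
    (hker.mono_set (Ioi_subset_Ioi hξ.le))
  have hlim := (tendsto_rpow_mul_div_sq_add_rpow hα ν).sub htail
  rw [sub_zero] at hlim
  exact hlim.congr fun h => by rw [hsplit, mul_sub]

theorem hybrid_cauchy_matern_tail_general
    (α₁ ν₁ ξ₁ α₂ ν₂ ξ₂ ω₁ ω₂ : ℝ)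
    (hα₁ : 0 < α₁) (hν₁ : 0 < ν₁) (hξ₁ : 0 < ξ₁)
    (hν₂ : 0 < ν₂) (hξ₂ : 0 < ξ₂) :
    Tendsto
      (fun h : ℝ => h ^ ν₁ *
        (ω₁ * (∫ u in (0 : ℝ)..ξ₁,
            Real.exp (-u * h ^ 2) * ((α₁ ^ (ν₁ / 2) / Real.Gamma (ν₁ / 2)) *
              u ^ (ν₁ / 2 - 1) * Real.exp (-α₁ * u))) +
         ω₂ * ∫ u in Ioi ξ₂,
            Real.exp (-u * h ^ 2) * ((1 / Real.Gamma ν₂) * (1 / (2 * α₂)) ^ (2 * ν₂) *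
              u ^ (-ν₂ - 1) * Real.exp (-1 / (4 * u * α₂ ^ 2)))))
      atTop (nhds (ω₁ * α₁ ^ (ν₁ / 2))) := by
  have hcauchy := tendsto_rpow_mul_intervalIntegral_exp_neg_mul_sq_mul_cauchyMixing hα₁ hν₁ hξ₁
  have hmatern := tendsto_rpow_mul_integral_exp_neg_mul_sq_Ioi ν₁ hξ₂
    (integrableOn_maternMixing_Ioi (α := α₂) hν₂ hξ₂)
  simpa [cauchyMixing, maternMixing, mul_add, mul_left_comm] using
    (hcauchy.const_mul ω₁).add (hmatern.const_mul ω₂)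

/-- Polynomial tail behaviour of the hybrid Cauchy–Matérn covariance:
`h ^ ν₁ * φ̃_CM h → ω₁ * α₁ ^ (ν₁ / 2)` as `h → ∞`. -/
theorem hybrid_cauchy_matern_tail
    (α₁ ν₁ ξ₁ α₂ ν₂ ξ₂ ω₁ ω₂ : ℝ)
    (hα₁ : 0 < α₁) (hν₁ : 0 < ν₁) (hξ₁ : 0 < ξ₁)
    (hα₂ : 0 < α₂) (hν₂ : 0 < ν₂) (hξ₂ : 0 < ξ₂)
    (hω₁ : 0 < ω₁) (hω₂ : 0 < ω₂) :
    Tendsto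
      (fun h : ℝ => h ^ ν₁ *
        (ω₁ * (∫ u in (0 : ℝ)..ξ₁,
            Real.exp (-u * h ^ 2) * ((α₁ ^ (ν₁ / 2) / Real.Gamma (ν₁ / 2)) *
              u ^ (ν₁ / 2 - 1) * Real.exp (-α₁ * u))) +
         ω₂ * ∫ u in Ioi ξ₂,
            Real.exp (-u * h ^ 2) * ((1 / Real.Gamma ν₂) * (1 / (2 * α₂)) ^ (2 * ν₂) *
              u ^ (-ν₂ - 1) * Real.exp (-1 / (4 * u * α₂ ^ 2)))))
      atTop (nhds (ω₁ * α₁ ^ (ν₁ / 2))) :=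
  hybrid_cauchy_matern_tail_general α₁ ν₁ ξ₁ α₂ ν₂ ξ₂ ω₁ ω₂ hα₁ hν₁ hξ₁ hν₂ hξ₂
end

section
/- Let α, ν, ξ > 0. Then lim_{h → ∞} h^{ν} ∫₀^{ξ} exp(−u h²) · (α^{ν/2}/Γ(ν/2)) · u^{ν/2 − 1} · exp(−α u) du = α^{ν/2}. -/
open MeasureTheory Real Set Filter Topology

/-!
Substituting `t = u h²` turns `h ^ ν ∫₀^ξ e^{-u h²} C u^{ν/2-1} e^{-α u} du` into
`C ∫₀^{ξ h²} e^{-t} t^{ν/2-1} e^{-α t / h²} dt`. The integrand is dominated by the Gamma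
integrand `C e^{-t} t^{ν/2-1}` and converges pointwise to it, so the limit is
`C Γ(ν/2) = α^{ν/2}`: the leading term of Watson's lemma.
-/

theorem rpow_mul_intervalIntegral_exp_neg_mul_rpow {c : ℝ} (hc : 0 < c) {ξ : ℝ} (hξ : 0 ≤ ξ)
    (s : ℝ) (ψ : ℝ → ℝ) :
    c ^ s * ∫ u in 0..ξ, exp (-(c * u)) * u ^ (s - 1) * ψ u =
      ∫ t in 0..c * ξ, exp (-t) * t ^ (s - 1) * ψ (t / c) := by
  have hcs : c ^ s = c * c ^ (s - 1) := by
    rw [rpow_sub_one hc.ne']; field_simp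
  have hsubst : ∀ u ∈ uIcc 0 ξ, c ^ (s - 1) * (exp (-(c * u)) * u ^ (s - 1) * ψ u) =
      exp (-(c * u)) * (c * u) ^ (s - 1) * ψ (c * u / c) := by
    intro u hu
    rw [uIcc_of_le hξ] at hu
    rw [mul_rpow hc.le hu.1, mul_div_cancel_left₀ u hc.ne']
    ring
  rw [hcs, mul_assoc, ← intervalIntegral.integral_const_mul,
    intervalIntegral.integral_congr hsubst,
    intervalIntegral.integral_comp_mul_left (fun t => exp (-t) * t ^ (s - 1) * ψ (t / c)) hc.ne',
    mul_zero, smul_eq_mul, mul_inv_cancel_left₀ hc.ne']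

theorem tendsto_rpow_mul_intervalIntegral_exp_neg_mul_rpow {s ξ M L : ℝ} {ψ : ℝ → ℝ}
    (hs : 0 < s) (hξ : 0 < ξ) (hψ : Measurable ψ) (hM : ∀ u ∈ Ioc 0 ξ, |ψ u| ≤ M)
    (hL : Tendsto ψ (𝓝[>] 0) (𝓝 L)) :
    Tendsto (fun c => c ^ s * ∫ u in 0..ξ, exp (-(c * u)) * u ^ (s - 1) * ψ u)
      atTop (𝓝 (Gamma s * L)) := by
  set F : ℝ → ℝ → ℝ := fun c =>
    (Ioc 0 (c * ξ)).indicator fun t => exp (-t) * t ^ (s - 1) * ψ (t / c) with hF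
  have hM0 : 0 ≤ M := (abs_nonneg _).trans (hM ξ ⟨hξ, le_rfl⟩)
  have hrescale : (fun c => ∫ t in Ioi 0, F c t) =ᶠ[atTop]
      fun c => c ^ s * ∫ u in 0..ξ, exp (-(c * u)) * u ^ (s - 1) * ψ u := by
    filter_upwards [eventually_gt_atTop 0] with c hc
    rw [rpow_mul_intervalIntegral_exp_neg_mul_rpow hc hξ.le,
      intervalIntegral.integral_of_le (by positivity), hF, setIntegral_indicator measurableSet_Ioc,
      inter_eq_right.mpr Ioc_subset_Ioi_self]
  have hGamma : Gamma s * L = ∫ t in Ioi 0, exp (-t) * t ^ (s - 1) * L := by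
    rw [integral_mul_const, Gamma_eq_integral hs]
  rw [hGamma]
  refine (tendsto_integral_filter_of_dominated_convergence (fun t => exp (-t) * t ^ (s - 1) * M)
    ?_ ?_ ((GammaIntegral_convergent hs).mul_const M) ?_).congr' hrescale
  · exact Eventually.of_forall fun c =>
      ((by fun_prop : Measurable _).indicator measurableSet_Ioc).aestronglyMeasurable
  · filter_upwards [eventually_gt_atTop 0] with c hc
    filter_upwards [ae_restrict_mem measurableSet_Ioi] with t ht
    have hG : 0 ≤ exp (-t) * t ^ (s - 1) := by have : 0 < t := ht; positivity
    rw [hF, norm_indicator_eq_indicator_norm]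
    by_cases hmem : t ∈ Ioc 0 (c * ξ)
    · rw [indicator_of_mem hmem, norm_mul, norm_of_nonneg hG, norm_eq_abs]
      exact mul_le_mul_of_nonneg_left
        (hM _ ⟨div_pos hmem.1 hc, (div_le_iff₀ hc).mpr (by linarith [hmem.2])⟩) hG
    · rw [indicator_of_notMem hmem]
      positivity
  · filter_upwards [ae_restrict_mem measurableSet_Ioi] with t ht
    have hdiv : Tendsto (fun c => t / c) atTop (𝓝[>] 0) :=
      tendsto_nhdsWithin_of_tendsto_nhds_of_eventually_within _
        (tendsto_const_nhds.div_atTop tendsto_id)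
        ((eventually_gt_atTop 0).mono fun c hc => div_pos ht hc)
    refine ((hL.comp hdiv).const_mul _).congr' ?_
    filter_upwards [eventually_ge_atTop (t / ξ)] with c hc
    have hmem : t ∈ Ioc 0 (c * ξ) := ⟨ht, (div_le_iff₀ hξ).mp hc⟩
    simp only [hF, Function.comp_apply, indicator_of_mem hmem]

/-- Polynomial tail behaviour of the truncated gamma mixture (the Cauchy
piece): `h ^ ν * ∫₀^ξ exp(-u h²) g_C(u; α, ν) du → α ^ (ν / 2)`. -/
theorem truncated_gamma_mixture_tail
    (α ν ξ : ℝ) (hα : 0 < α) (hν : 0 < ν) (hξ : 0 < ξ) :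
    Tendsto
      (fun h : ℝ => h ^ ν *
        ∫ u in (0 : ℝ)..ξ,
          Real.exp (-u * h ^ 2) * ((α ^ (ν / 2) / Real.Gamma (ν / 2)) *
            u ^ (ν / 2 - 1) * Real.exp (-α * u)))
      atTop (nhds (α ^ (ν / 2))) := by
  set C := α ^ (ν / 2) / Gamma (ν / 2)
  have hΓ : 0 < Gamma (ν / 2) := Gamma_pos_of_pos (by positivity)
  have hψ : Continuous fun u => C * exp (-α * u) := by fun_prop
  have hbound : ∀ u ∈ Ioc 0 ξ, |C * exp (-α * u)| ≤ C := fun u hu => by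
    rw [abs_of_pos (by positivity)]
    exact mul_le_of_le_one_right (by positivity) (exp_le_one_iff.mpr (by nlinarith [hu.1]))
  have hlim := (tendsto_rpow_mul_intervalIntegral_exp_neg_mul_rpow (s := ν / 2) (by positivity) hξ
    hψ.measurable hbound ((hψ.tendsto 0).mono_left nhdsWithin_le_nhds)).comp
    (tendsto_pow_atTop two_ne_zero)
  rw [mul_zero, exp_zero, mul_one, mul_div_cancel₀ _ hΓ.ne'] at hlim
  refine hlim.congr' ?_
  filter_upwards [eventually_gt_atTop 0] with h hh
  rw [Function.comp_apply, ← rpow_natCast, ← rpow_mul hh.le]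
  congr 1
  · rw [Nat.cast_ofNat, mul_div_cancel₀ ν two_ne_zero]
  · exact intervalIntegral.integral_congr fun u _ => by ring_nf
end

section
/- Let d be a positive integer and let A, B, a, b be positive reals such that 1 < a/b < (A/B)^{2/d}. Then the function h ↦ A exp(−a h²) − B exp(−b h²) is positive definite on ℝ^d. -/
/-!
The kernel is the Fourier transform of a difference of two Gaussians: with
`g_t(v) = (π/t)^(d/2) exp(-π²‖v‖²/t)` one has `𝓕 g_t (x) = exp(-t‖x‖²)`, so the kernel is
`𝓕 (A g_a - B g_b)`. The quadratic form of the Fourier transform of an integrable `w` is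
`∫ w(v) |∑ cᵢ exp(-2πi⟪v, sᵢ⟫)|² dv`, which is nonnegative as soon as `w ≥ 0`. Finally
`A g_a ≥ B g_b` pointwise: the exponential factors compare because `b < a`, and the constants
compare because `(a/b)^(d/2) ≤ A/B`.
-/

open Real MeasureTheory Complex Module
open scoped RealInnerProductSpace FourierTransform ComplexConjugate

section

variable {V : Type*} [NormedAddCommGroup V] [InnerProductSpace ℝ V]

theorem cexp_inner_sub_mul_I (v x y : V) :
    cexp (↑(-2 * π * ⟪v, x - y⟫) * I) =
      cexp (↑(-2 * π * ⟪v, x⟫) * I) * conj (cexp (↑(-2 * π * ⟪v, y⟫) * I)) := by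
  rw [← exp_conj, ← Complex.exp_add, map_mul, conj_ofReal, conj_I, inner_sub_right]
  push_cast
  ring_nf

/-- The function whose Fourier transform is `x ↦ exp (-t ‖x‖²)`. -/
noncomputable def gaussianSpectralDensity (t : ℝ) (v : V) : ℝ :=
  (π / t) ^ (finrank ℝ V / 2 : ℝ) * rexp (-(π ^ 2 / t) * ‖v‖ ^ 2)

theorem mul_gaussianSpectralDensity_le {a b A B : ℝ} (hb : 0 < b) (hba : b ≤ a) (hB : 0 ≤ B)
    (hAB : B * (a / b) ^ (finrank ℝ V / 2 : ℝ) ≤ A) (v : V) :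
    B * gaussianSpectralDensity b v ≤ A * gaussianSpectralDensity a v := by
  have ha : 0 < a := hb.trans_le hba
  have hA : 0 ≤ A := (mul_nonneg hB (by positivity)).trans hAB
  have hscale : (π / b) ^ (finrank ℝ V / 2 : ℝ) =
      (a / b) ^ (finrank ℝ V / 2 : ℝ) * (π / a) ^ (finrank ℝ V / 2 : ℝ) := by
    rw [← mul_rpow (by positivity) (by positivity)]
    congr 1
    field_simp
  calc B * gaussianSpectralDensity b v
      = B * (a / b) ^ (finrank ℝ V / 2 : ℝ) *
          ((π / a) ^ (finrank ℝ V / 2 : ℝ) * rexp (-(π ^ 2 / b) * ‖v‖ ^ 2)) := by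
        rw [gaussianSpectralDensity, hscale]
        ring
    _ ≤ A * gaussianSpectralDensity a v := by
        rw [gaussianSpectralDensity]
        gcongr

variable [FiniteDimensional ℝ V] [MeasurableSpace V] [BorelSpace V]

theorem sum_sum_mul_conj_mul_fourier_sub {ι : Type*} [Fintype ι] {w : V → ℂ}
    (hw : Integrable w) (s : ι → V) (c : ι → ℂ) :
    ∑ i, ∑ j, c i * conj (c j) * 𝓕 w (s i - s j) =
      ∫ v, (‖∑ i, c i * cexp (↑(-2 * π * ⟪v, s i⟫) * I)‖ ^ 2 : ℝ) * w v := by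
  have hint (x : V) : Integrable fun v ↦ cexp (↑(-2 * π * ⟪v, x⟫) * I) * w v := by
    simpa [Circle.smul_def, fourierChar_apply] using (fourierIntegral_convergent_iff x).2 hw
  calc ∑ i, ∑ j, c i * conj (c j) * 𝓕 w (s i - s j)
      = ∫ v, ∑ i, ∑ j, c i * conj (c j) * (cexp (↑(-2 * π * ⟪v, s i - s j⟫) * I) * w v) := by
        rw [integral_finsetSum _ fun i _ ↦ integrable_finsetSum _ fun j _ ↦ (hint _).const_mul _]
        refine Finset.sum_congr rfl fun i _ ↦ ?_
        rw [integral_finsetSum _ fun j _ ↦ (hint _).const_mul _]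
        simp_rw [fourier_eq', smul_eq_mul, integral_const_mul]
    _ = ∫ v, (‖∑ i, c i * cexp (↑(-2 * π * ⟪v, s i⟫) * I)‖ ^ 2 : ℝ) * w v := by
        congr 1 with v
        rw [ofReal_pow, ← mul_conj', map_sum, Finset.sum_mul_sum, Finset.sum_mul]
        refine Finset.sum_congr rfl fun i _ ↦ ?_
        rw [Finset.sum_mul]
        refine Finset.sum_congr rfl fun j _ ↦ ?_
        rw [cexp_inner_sub_mul_I, map_mul]
        ring

theorem sum_sum_mul_mul_re_fourier_sub_nonneg {ι : Type*} [Fintype ι] {w : V → ℝ}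
    (hw : Integrable w) (hw_nonneg : 0 ≤ w) (s : ι → V) (c : ι → ℝ) :
    0 ≤ ∑ i, ∑ j, c i * c j * (𝓕 (fun v ↦ (w v : ℂ)) (s i - s j)).re := by
  have h := sum_sum_mul_conj_mul_fourier_sub (w := fun v ↦ (w v : ℂ)) hw.ofReal s
    (fun i ↦ (c i : ℂ))
  simp_rw [conj_ofReal, ← ofReal_mul, integral_complex_ofReal] at h
  have h_re := congrArg re h
  simp only [re_sum, re_ofReal_mul, ofReal_re] at h_re
  rw [h_re]
  exact integral_nonneg fun v ↦ mul_nonneg (sq_nonneg _) (hw_nonneg v)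

theorem integrable_gaussianSpectralDensity {t : ℝ} (ht : 0 < t) :
    Integrable (gaussianSpectralDensity (V := V) t) := by
  refine (Integrable.of_integral_ne_zero ?_).const_mul _
  rw [GaussianFourier.integral_rexp_neg_mul_sq_norm (by positivity)]
  positivity

theorem fourier_gaussianSpectralDensity {t : ℝ} (ht : 0 < t) (x : V) :
    𝓕 (fun v : V ↦ (gaussianSpectralDensity t v : ℂ)) x = rexp (-t * ‖x‖ ^ 2) := by
  have hu : 0 < ((π ^ 2 / t : ℝ) : ℂ).re := by rw [ofReal_re]; positivity
  have hK : (((π / t) ^ (finrank ℝ V / 2 : ℝ) : ℝ) : ℂ) *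
      (π / ↑(π ^ 2 / t)) ^ (finrank ℝ V / 2 : ℂ) = 1 := by
    rw [← ofReal_div, ← ofReal_natCast, ← ofReal_ofNat, ← ofReal_div,
      ← ofReal_cpow (by positivity), ← ofReal_mul, ← mul_rpow (by positivity) (by positivity),
      show π / t * (π / (π ^ 2 / t)) = 1 by field_simp, one_rpow, ofReal_one]
  calc 𝓕 (fun v : V ↦ (gaussianSpectralDensity t v : ℂ)) x
      = (((π / t) ^ (finrank ℝ V / 2 : ℝ) : ℝ) : ℂ) *
          𝓕 (fun v : V ↦ cexp (-↑(π ^ 2 / t) * ‖v‖ ^ 2)) x := by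
        simp_rw [fourier_eq', gaussianSpectralDensity, smul_eq_mul, ← integral_const_mul]
        congr 1 with v
        push_cast
        ring
    _ = rexp (-t * ‖x‖ ^ 2) := by
        rw [fourier_gaussian_innerProductSpace hu, ← mul_assoc, hK, one_mul]
        push_cast
        congr 1
        field_simp

theorem fourier_mul_gaussianSpectralDensity_sub {a b : ℝ} (ha : 0 < a) (hb : 0 < b) (A B : ℝ)
    (x : V) :
    𝓕 (fun v : V ↦ ((A * gaussianSpectralDensity a v - B * gaussianSpectralDensity b v : ℝ) : ℂ))
        x = ((A * rexp (-a * ‖x‖ ^ 2) - B * rexp (-b * ‖x‖ ^ 2) : ℝ) : ℂ) := by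
  have hint {t : ℝ} (ht : 0 < t) (C : ℝ) :
      Integrable fun v : V ↦ 𝐞 (-⟪v, x⟫) • ((C : ℂ) * gaussianSpectralDensity t v) :=
    (fourierIntegral_convergent_iff x).2
      ((integrable_gaussianSpectralDensity ht).ofReal.const_mul _)
  have hcomm (u : Circle) (C z : ℂ) : u • (C * z) = C * (u • z) := by
    simp only [Circle.smul_def, smul_eq_mul]
    ring
  simp_rw [fourier_eq, ofReal_sub, ofReal_mul, smul_sub]
  rw [integral_sub (hint ha A) (hint hb B)]
  simp_rw [hcomm, integral_const_mul, ← fourier_eq, fourier_gaussianSpectralDensity ha,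
    fourier_gaussianSpectralDensity hb]

end

/-- Sufficiency part of Posa's criterion: a difference of Gaussian kernels
`A exp(-a h²) - B exp(-b h²)` with `1 < a/b < (A/B)^(2/d)` is positive
definite on `ℝ^d`. -/
theorem gaussian_difference_posdef
    (d : ℕ) (hd : 0 < d) (A B a b : ℝ)
    (hA : 0 < A) (hB : 0 < B) (ha : 0 < a) (hb : 0 < b)
    (h1 : 1 < a / b) (h2 : a / b < (A / B) ^ (2 / (d : ℝ))) :
    ∀ (n : ℕ) (s : Fin n → EuclideanSpace ℝ (Fin d)) (c : Fin n → ℝ),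
      0 ≤ ∑ i : Fin n, ∑ j : Fin n, c i * c j *
        (A * Real.exp (-a * ‖s i - s j‖ ^ 2) -
         B * Real.exp (-b * ‖s i - s j‖ ^ 2)) := by
  intro n s c
  have hba : b < a := (one_lt_div hb).mp h1
  have hAB : B * (a / b) ^ (finrank ℝ (EuclideanSpace ℝ (Fin d)) / 2 : ℝ) ≤ A := by
    rw [finrank_euclideanSpace_fin, mul_comm, ← le_div_iff₀ hB]
    refine ((lt_rpow_inv_iff_of_pos (by positivity) (div_nonneg hA.le hB.le)
      (div_pos (Nat.cast_pos.2 hd) two_pos)).1 ?_).le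
    rwa [inv_div]
  have hW : Integrable fun v : EuclideanSpace ℝ (Fin d) ↦
      A * gaussianSpectralDensity a v - B * gaussianSpectralDensity b v :=
    ((integrable_gaussianSpectralDensity ha).const_mul A).sub
      ((integrable_gaussianSpectralDensity hb).const_mul B)
  have hW_nonneg : ∀ v : EuclideanSpace ℝ (Fin d),
      0 ≤ A * gaussianSpectralDensity a v - B * gaussianSpectralDensity b v := fun v ↦
    sub_nonneg.2 (mul_gaussianSpectralDensity_le hb hba.le hB.le hAB v)
  simpa only [fourier_mul_gaussianSpectralDensity_sub ha hb, ofReal_re] using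
    sum_sum_mul_mul_re_fourier_sub_nonneg hW hW_nonneg s c
end

section
/- Let u > 0, η > 1 and τ > 0 with τ η ≥ 1. Then for every real h, τ exp(−u η h²) − exp(−u h²) ≥ (τ η)^{−1/(η−1)} · (1 − η)/η, and this lower bound is attained at h* = √(log(τ η)/(u (η − 1))). -/
/-!
Substituting `t = exp(-u h²) ∈ (0, 1]` turns the kernel into `τ t^η - t`, a convex function of
`t > 0` whose critical point is `t* = (τη)^(-1/(η-1))`. Bernoulli's inequality at `t*` (the
tangent line of `t ↦ t^η`) gives the lower bound `τ t*^η - t* = t* (1 - η) / η`, and `h*` is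
exactly the point where `exp(-u h²) = t*`.
-/

open Real

namespace HoleEffect

variable {τ η : ℝ}

theorem mul_rpow_critical (hτη : 0 < τ * η) (hη : η ≠ 1) :
    τ * ((τ * η) ^ (-(1 / (η - 1)))) ^ η = (τ * η) ^ (-(1 / (η - 1))) / η := by
  have hη1 : η - 1 ≠ 0 := sub_ne_zero.mpr hη
  have hτ : τ ≠ 0 := left_ne_zero_of_mul hτη.ne'
  have hη0 : η ≠ 0 := right_ne_zero_of_mul hτη.ne'
  have hexp : -(1 / (η - 1)) * η = -(1 / (η - 1)) + -1 := by field_simp; ring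
  rw [← rpow_mul hτη.le, hexp, rpow_add hτη, rpow_neg_one]
  field_simp

theorem critical_value_le_mul_rpow_sub (hτη : 0 < τ * η) (hη : 1 < η) {t : ℝ} (ht : 0 ≤ t) :
    (τ * η) ^ (-(1 / (η - 1))) * ((1 - η) / η) ≤ τ * t ^ η - t := by
  set c := (τ * η) ^ (-(1 / (η - 1)))
  have hc : 0 < c := rpow_pos_of_pos hτη _
  have hη0 : 0 < η := by linarith
  have hτ : 0 < τ := pos_of_mul_pos_left hτη hη0.le
  have bernoulli : 1 + η * (t / c - 1) ≤ t ^ η / c ^ η := by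
    rw [← div_rpow ht hc.le]
    simpa using one_add_mul_self_le_rpow_one_add (s := t / c - 1)
      (by linarith [div_nonneg ht hc.le]) hη.le
  have scaled := mul_le_mul_of_nonneg_left bernoulli (by positivity : 0 ≤ τ * c ^ η)
  have lhs : τ * c ^ η * (1 + η * (t / c - 1)) = c * ((1 - η) / η) + t := by
    rw [mul_rpow_critical hτη hη.ne']
    field_simp; ring
  have rhs : τ * c ^ η * (t ^ η / c ^ η) = τ * t ^ η := by
    field_simp [(rpow_pos_of_pos hc η).ne']
  linarith

end HoleEffect

theorem exp_neg_mul_mul_sq (u η h : ℝ) :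
    exp (-(u * η * h ^ 2)) = exp (-(u * h ^ 2)) ^ η := by
  rw [← exp_mul]; ring_nf

theorem exp_neg_mul_sq_sqrt_log_div {u η a : ℝ} (hu : 0 < u) (hη : 1 < η) (ha : 1 ≤ a) :
    exp (-(u * (√(log a / (u * (η - 1)))) ^ 2)) = a ^ (-(1 / (η - 1))) := by
  have hη1 : 0 < η - 1 := by linarith
  rw [sq_sqrt (by have := log_nonneg ha; positivity), rpow_def_of_pos (by linarith)]
  congr 1
  field_simp

open HoleEffect in
theorem hole_effect_kernel_lower_bound_general
    (u η τ : ℝ) (hu : 0 < u) (hη : 1 < η) (hτη : 1 ≤ τ * η) :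
    (∀ h : ℝ,
      (τ * η) ^ (-(1 / (η - 1))) * ((1 - η) / η) ≤
        τ * Real.exp (-(u * η * h ^ 2)) - Real.exp (-(u * h ^ 2))) ∧
    (τ * Real.exp (-(u * η * (Real.sqrt (Real.log (τ * η) / (u * (η - 1)))) ^ 2)) -
        Real.exp (-(u * (Real.sqrt (Real.log (τ * η) / (u * (η - 1)))) ^ 2)) =
      (τ * η) ^ (-(1 / (η - 1))) * ((1 - η) / η)) := by
  have hpos : 0 < τ * η := by linarith
  refine ⟨fun h => ?_, ?_⟩
  · rw [exp_neg_mul_mul_sq]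
    exact critical_value_le_mul_rpow_sub hpos hη (exp_pos _).le
  · rw [exp_neg_mul_mul_sq, exp_neg_mul_sq_sqrt_log_div hu hη hτη,
      mul_rpow_critical hpos hη.ne']
    field_simp [(by linarith : η ≠ 0)]

/-- The hole-effect Gaussian-difference kernel `τ exp(-u η h²) - exp(-u h²)`
is bounded below by `(τη)^(-1/(η-1)) (1-η)/η`, with equality at
`h* = √(log(τη)/(u(η-1)))`. -/
theorem hole_effect_kernel_lower_bound
    (u η τ : ℝ) (hu : 0 < u) (hη : 1 < η) (hτ : 0 < τ) (hτη : 1 ≤ τ * η) :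
    (∀ h : ℝ,
      (τ * η) ^ (-(1 / (η - 1))) * ((1 - η) / η) ≤
        τ * Real.exp (-(u * η * h ^ 2)) - Real.exp (-(u * h ^ 2))) ∧
    (τ * Real.exp (-(u * η * (Real.sqrt (Real.log (τ * η) / (u * (η - 1)))) ^ 2)) -
        Real.exp (-(u * (Real.sqrt (Real.log (τ * η) / (u * (η - 1)))) ^ 2)) =
      (τ * η) ^ (-(1 / (η - 1))) * ((1 - η) / η)) :=
  hole_effect_kernel_lower_bound_general u η τ hu hη hτη
end
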